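/- arXiv:2501.15560 — 7 statements merged into one kernel-verified Lean document; each statement's English description precedes it below -/
import Mathlib

section
/- If L is a Lie algebra whose derivation algebra Der(L) is a simple Lie algebra, then every derivation of L is inner, i.e., Der(L) = ad(L). -/
/-- If `L` is a Lie algebra whose derivation algebra `Der(L)` is simple, then every
derivation of `L` is inner, i.e., the adjoint map `ad : L → Der(L)` is surjective. -/
theorem stmt0 (F L : Type*) [Field F] [LieRing L] [LieAlgebra F L]
    (hsimple : LieAlgebra.IsSimple F (LieDerivation F L L)) :
    Function.Surjective (LieDerivation.ad F L) := by
  rcases hsimple.eq_bot_or_eq_top (LieDerivation.ad F L).idealRange with h | h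
  · -- ad has trivial range, so L is abelian; derive a contradiction
    exfalso
    have habel : ∀ x y : L, ⁅x, y⁆ = 0 := by
      intro x y
      have hx : LieDerivation.ad F L x ∈ (LieDerivation.ad F L).idealRange :=
        LieDerivation.mem_ad_idealRange_iff.mpr ⟨x, rfl⟩
      rw [h, LieSubmodule.mem_bot] at hx
      have := congrArg (fun D : LieDerivation F L L => D y) hx
      simpa [LieDerivation.coe_ad_apply_eq_ad_apply, LieAlgebra.ad_apply] using this
    -- the identity map is a derivation
    let idD : LieDerivation F L L :=
      { toLinearMap := LinearMap.id
        leibniz' := by intro a b; simp [habel] }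
    have hcenter : idD ∈ LieAlgebra.center F (LieDerivation F L L) := by
      intro D
      ext x
      have : (⁅idD, D⁆ : LieDerivation F L L) x = idD (D x) - D (idD x) := rfl
      simp [this, idD]
    rcases hsimple.eq_bot_or_eq_top (LieAlgebra.center F (LieDerivation F L L)) with hc | hc
    · -- center is ⊥, so idD = 0, so L = 0, so Der is abelian, contradiction
      rw [hc, LieSubmodule.mem_bot] at hcenter
      have hL : ∀ x : L, x = 0 := by
        intro x
        have := congrArg (fun D : LieDerivation F L L => D x) hcenter
        simpa [idD] using this
      have : IsLieAbelian (LieDerivation F L L) := by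
        constructor
        intro D E
        ext x
        simp [hL x]
      exact hsimple.non_abelian this
    · exact hsimple.non_abelian ((LieAlgebra.isLieAbelian_iff_center_eq_top F _).mpr hc)
  · intro D
    have hD : D ∈ (LieDerivation.ad F L).idealRange := h ▸ LieSubmodule.mem_top D
    exact LieDerivation.mem_ad_idealRange_iff.mp hD
end

section
/- Let L be a Lie algebra admitting a universal central extension 0 → Ĉ → L̂ → L → 0 with dim Ĉ = 1. Then every covering algebra of L is isomorphic either to L or to L̂. -/
/-!
Universality gives `ψ : L̂ → E` over `L`, so `E = ψ(L̂) + Z(E)`. Brackets do not see the centre,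
hence `E = [E, E] = [ψ(L̂), ψ(L̂)] ⊆ ψ(L̂)` for perfect `E`, and `ψ` is onto. Its kernel lies in the
line `Ĉ = ker q`, so it is either `0`, and `ψ` is an isomorphism, or all of `Ĉ`, and then `π`
is injective.
-/

universe u

namespace LieHom

variable {R M E L : Type*} [CommRing R] [LieRing M] [LieAlgebra R M] [LieRing E] [LieAlgebra R E]
  [LieRing L] [LieAlgebra R L]

theorem exists_sub_mem_center_of_surjective_comp {π : E →ₗ⁅R⁆ L} {ψ : M →ₗ⁅R⁆ E}
    (hπ : π.ker ≤ LieAlgebra.center R E) (h : Function.Surjective (π.comp ψ)) (x : E) :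
    ∃ a, x - ψ a ∈ LieAlgebra.center R E := by
  obtain ⟨a, ha⟩ := h (π x)
  exact ⟨a, hπ <| by simp [LieHom.mem_ker, ← ha]⟩

theorem lie_mem_range_of_sub_mem_center {ψ : M →ₗ⁅R⁆ E}
    (h : ∀ x : E, ∃ a, x - ψ a ∈ LieAlgebra.center R E) (x y : E) :
    ⁅x, y⁆ ∈ Set.range ψ := by
  obtain ⟨a, ha⟩ := h x
  obtain ⟨b, hb⟩ := h y
  have hx : ⁅x - ψ a, y⁆ = 0 := by
    rw [← lie_skew, (LieModule.mem_maxTrivSubmodule R E E _).mp ha, neg_zero]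
  have hy : ⁅ψ a, y - ψ b⁆ = 0 := (LieModule.mem_maxTrivSubmodule R E E _).mp hb _
  refine ⟨⁅a, b⁆, ?_⟩
  rw [map_lie, ← sub_eq_zero]
  calc ⁅ψ a, ψ b⁆ - ⁅x, y⁆ = -(⁅x - ψ a, y⁆ + ⁅ψ a, y - ψ b⁆) := by
        simp only [sub_lie, lie_sub]; abel
    _ = 0 := by rw [hx, hy, add_zero, neg_zero]

theorem surjective_of_perfect_of_sub_mem_center {ψ : M →ₗ⁅R⁆ E}
    (hperf : ⁅(⊤ : LieIdeal R E), (⊤ : LieIdeal R E)⁆ = ⊤)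
    (h : ∀ x : E, ∃ a, x - ψ a ∈ LieAlgebra.center R E) : Function.Surjective ψ := by
  have hspan : (⁅(⊤ : LieIdeal R E), (⊤ : LieIdeal R E)⁆ : LieIdeal R E).toSubmodule ≤
      LinearMap.range (ψ : M →ₗ[R] E) := by
    rw [LieSubmodule.lieIdeal_oper_eq_linear_span, Submodule.span_le]
    rintro _ ⟨x, y, rfl⟩
    exact lie_mem_range_of_sub_mem_center h x y
  rw [hperf] at hspan
  exact fun x ↦ hspan (LieSubmodule.mem_top x)

theorem injective_of_comp_eq_of_ker_le {π : E →ₗ⁅R⁆ L} {ψ : M →ₗ⁅R⁆ E} {q : M →ₗ⁅R⁆ L}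
    (hcomp : π.comp ψ = q) (hψ : Function.Surjective ψ) (hker : q.ker ≤ ψ.ker) :
    Function.Injective π := by
  rw [← ker_eq_bot, LieSubmodule.eq_bot_iff]
  intro x hx
  obtain ⟨a, rfl⟩ := hψ x
  exact hker (by rwa [← hcomp, mem_ker, comp_apply])

theorem ker_le_ker_of_comp_eq {π : E →ₗ⁅R⁆ L} {ψ : M →ₗ⁅R⁆ E} {q : M →ₗ⁅R⁆ L}
    (hcomp : π.comp ψ = q) : ψ.ker ≤ q.ker := fun a ha ↦ by
  rw [mem_ker] at ha ⊢
  rw [← hcomp, comp_apply, ha, map_zero]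

end LieHom

theorem Submodule.eq_bot_or_eq_of_le_of_finrank_eq_one {K V : Type*} [DivisionRing K]
    [AddCommGroup V] [Module K V] {N S : Submodule K V} (hle : N ≤ S)
    (hS : Module.finrank K S = 1) : N = ⊥ ∨ N = S :=
  (Submodule.isAtom_iff_finrank_eq_one.mpr hS).le_iff.mp hle

theorem stmt6_general (F : Type u) [Field F]
    (L Lhat : Type u) [LieRing L] [LieAlgebra F L] [LieRing Lhat] [LieAlgebra F Lhat]
    -- `q : L̂ → L` is a central extension
    (q : Lhat →ₗ⁅F⁆ L) (hqsurj : Function.Surjective q)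
    -- ... which is universal
    (huniv : ∀ (E : Type u) [LieRing E] [LieAlgebra F E] (π : E →ₗ⁅F⁆ L),
      Function.Surjective π → π.ker ≤ LieAlgebra.center F E →
        ∃! ψ : Lhat →ₗ⁅F⁆ E, π.comp ψ = q)
    -- `Ĉ = ker q` is one-dimensional
    (hdim : Module.finrank F (q.ker : LieIdeal F Lhat) = 1) :
    ∀ (E : Type u) [LieRing E] [LieAlgebra F E] (π : E →ₗ⁅F⁆ L),
      Function.Surjective π → π.ker ≤ LieAlgebra.center F E →
        ⁅(⊤ : LieIdeal F E), (⊤ : LieIdeal F E)⁆ = ⊤ →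
          Nonempty (E ≃ₗ⁅F⁆ L) ∨ Nonempty (E ≃ₗ⁅F⁆ Lhat) := by
  intro E _ _ π hπsurj hπcent hperf
  obtain ⟨ψ, hψ, -⟩ := huniv E π hπsurj hπcent
  have hψsurj : Function.Surjective ψ :=
    LieHom.surjective_of_perfect_of_sub_mem_center hperf
      (LieHom.exists_sub_mem_center_of_surjective_comp hπcent (hψ ▸ hqsurj))
  rcases Submodule.eq_bot_or_eq_of_le_of_finrank_eq_one
    ((LieSubmodule.toSubmodule_le_toSubmodule _ _).mpr (LieHom.ker_le_ker_of_comp_eq hψ)) hdim with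
    hbot | htop
  · right
    have hψinj : Function.Injective ψ := by
      rwa [← LieHom.ker_eq_bot, ← LieSubmodule.toSubmodule_eq_bot]
    exact ⟨(LieEquiv.ofBijective ψ ⟨hψinj, hψsurj⟩).symm⟩
  · left
    have hπinj : Function.Injective π :=
      LieHom.injective_of_comp_eq_of_ker_le hψ hψsurj
        ((LieSubmodule.toSubmodule_le_toSubmodule _ _).mp htop.ge)
    exact ⟨LieEquiv.ofBijective π ⟨hπinj, hπsurj⟩⟩

/-- Let `L` admit a universal central extension `0 → Ĉ → L̂ → L → 0` with `dim Ĉ = 1`.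
Then every covering algebra of `L` is isomorphic either to `L` or to `L̂`. -/
theorem stmt6 (F : Type u) [Field F]
    (L Lhat : Type u) [LieRing L] [LieAlgebra F L] [LieRing Lhat] [LieAlgebra F Lhat]
    -- `q : L̂ → L` is a central extension
    (q : Lhat →ₗ⁅F⁆ L) (hqsurj : Function.Surjective q)
    (hqcent : q.ker ≤ LieAlgebra.center F Lhat)
    -- ... which is universal
    (huniv : ∀ (E : Type u) [LieRing E] [LieAlgebra F E] (π : E →ₗ⁅F⁆ L),
      Function.Surjective π → π.ker ≤ LieAlgebra.center F E →
        ∃! ψ : Lhat →ₗ⁅F⁆ E, π.comp ψ = q)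
    -- `Ĉ = ker q` is one-dimensional
    (hdim : Module.finrank F (q.ker : LieIdeal F Lhat) = 1) :
    ∀ (E : Type u) [LieRing E] [LieAlgebra F E] (π : E →ₗ⁅F⁆ L),
      Function.Surjective π → π.ker ≤ LieAlgebra.center F E →
        ⁅(⊤ : LieIdeal F E), (⊤ : LieIdeal F E)⁆ = ⊤ →
          Nonempty (E ≃ₗ⁅F⁆ L) ∨ Nonempty (E ≃ₗ⁅F⁆ Lhat) :=
  stmt6_general F L Lhat q hqsurj huniv hdim
end

section
/- In the two-sided Witt algebra W(G,I) with G = ℤ^r and I = {1,…,r}, the linear map θ : W_r → W(G,I) sending x^a ∂_i to −w(a − e_i, i) is an injective homomorphism of Lie algebras, where W_r = Der(F[x_1,…,x_r]). -/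
/-!
The derivations `x^a ∂_i` form a basis of `W_r`, and `θ` sends it to minus the subfamily
`w(a - e_i, i)` of the basis of `W(G, I)`; since `(i, a) ↦ (a - e_i, i)` is injective, `θ` is
injective. Both `θ ⁅D₁, D₂⁆` and `⁅θ D₁, θ D₂⁆` are bilinear, so it suffices to compare them on
basis elements, where `⁅x^a ∂_i, x^b ∂_j⁆ = b_i x^(a+b-e_i) ∂_j - a_j x^(a+b-e_j) ∂_i` and
`(a - e_i)_j = a_j - δ_ij` make both sides agree.
-/

open MvPolynomial

namespace MvPolynomial

variable {R σ : Type*} [CommRing R] [DecidableEq σ]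

theorem mkDerivation_single_monomial_monomial (i : σ) (a b : σ →₀ ℕ) :
    mkDerivation R (Pi.single i (monomial a 1)) (monomial b 1) =
      (b i : R) • monomial (a + b - Finsupp.single i 1) (1 : R) := by
  rw [mkDerivation_monomial, one_smul, Finsupp.sum, Finset.sum_eq_single i]
  · rw [Pi.single_eq_same, smul_eq_mul, monomial_mul, mul_one, smul_monomial, smul_eq_mul,
      mul_one]
    by_cases hb : b i = 0
    · simp [hb]
    · congr 2
      ext m
      simp only [Finsupp.add_apply, Finsupp.tsub_apply, Finsupp.single_apply]
      split_ifs with h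
      · subst h; omega
      · omega
  · intro k _ hk
    rw [Pi.single_eq_of_ne hk, smul_zero]
  · intro hi
    simp [Finsupp.notMem_support_iff.mp hi]

theorem lie_mkDerivation_single_monomial (i j : σ) (a b : σ →₀ ℕ) :
    ⁅mkDerivation R (Pi.single i (monomial a (1 : R))),
        mkDerivation R (Pi.single j (monomial b (1 : R)))⁆ =
      (b i : R) • mkDerivation R (Pi.single j (monomial (a + b - Finsupp.single i 1) 1)) -
        (a j : R) • mkDerivation R (Pi.single i (monomial (a + b - Finsupp.single j 1) 1)) := by
  refine derivation_ext fun k => ?_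
  rw [Derivation.commutator_apply, Derivation.sub_apply, Derivation.smul_apply,
    Derivation.smul_apply]
  simp only [mkDerivation_X, Pi.single_apply]
  split_ifs <;> simp [mkDerivation_single_monomial_monomial, add_comm a b]

variable (R σ) [Fintype σ]

noncomputable def derivationBasis :
    Module.Basis (σ × (σ →₀ ℕ)) R (Derivation R (MvPolynomial σ R) (MvPolynomial σ R)) :=
  ((Pi.basis fun _ : σ => basisMonomials σ R).map (mkDerivationEquiv R)).reindex
    (Equiv.sigmaEquivProd _ _)

variable {R σ}

@[simp]
theorem derivationBasis_apply (i : σ) (a : σ →₀ ℕ) :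
    derivationBasis R σ (i, a) = mkDerivation R (Pi.single i (monomial a (1 : R))) := by
  simp [derivationBasis, coe_basisMonomials, mkDerivationEquiv]

end MvPolynomial

theorem LinearMap.map_lie_of_basis {R L L' ι : Type*} [CommRing R] [LieRing L] [LieAlgebra R L]
    [LieRing L'] [LieAlgebra R L'] (b : Module.Basis ι R L) (f : L →ₗ[R] L')
    (h : ∀ x y, f ⁅b x, b y⁆ = ⁅f (b x), f (b y)⁆) (u v : L) : f ⁅u, v⁆ = ⁅f u, f v⁆ :=
  LinearMap.congr_fun₂ (LinearMap.ext_basis b b h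
    (B := (LieModule.toEnd R L L : L →ₗ[R] L →ₗ[R] L).compr₂ f)
    (B' := (LieModule.toEnd R L' L' : L' →ₗ[R] L' →ₗ[R] L').compl₁₂ f f)) u v

theorem natCast_smul_congr {R M α : Type*} [Semiring R] [AddCommMonoid M] [Module R M]
    (f : α → M) {n : ℕ} {x y : α} (h : n ≠ 0 → x = y) : (n : R) • f x = (n : R) • f y := by
  obtain rfl | hn := eq_or_ne n 0
  · simp
  · rw [h hn]

section WittAlgebra

variable {σ : Type*} [DecidableEq σ]

/-- The degree `a - e_i ∈ ℤ^σ` of `x^a ∂_i`, so that `θ (x^a ∂_i) = -w(a - e_i, i)`. -/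
def wittExponent (a : σ →₀ ℕ) (i : σ) : σ → ℤ := fun j => (a j : ℤ) - if j = i then 1 else 0

theorem wittExponent_injective (i : σ) : Function.Injective (wittExponent · i) := by
  intro a b h
  ext j
  have := congrFun h j
  simp only [wittExponent] at this
  omega

theorem wittExponent_add_tsub_single {a b : σ →₀ ℕ} {l : σ} (hl : a l + b l ≠ 0) (k : σ) :
    wittExponent (a + b - Finsupp.single l 1) k = wittExponent a k + wittExponent b l := by
  funext j
  simp only [wittExponent, Pi.add_apply, Finsupp.tsub_apply, Finsupp.add_apply,
    Finsupp.single_apply]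
  split_ifs <;> subst_vars <;> simp at * <;> omega

def wittIndex (x : σ × (σ →₀ ℕ)) : (σ → ℤ) × σ := (wittExponent x.2 x.1, x.1)

theorem wittIndex_injective : Function.Injective (wittIndex (σ := σ)) := by
  rintro ⟨i, a⟩ ⟨j, b⟩ h
  obtain ⟨h, rfl⟩ := Prod.mk.inj h
  dsimp only at h
  rw [wittExponent_injective i h]

variable {R W : Type*} [CommRing R] [LieRing W] [LieAlgebra R W] {w : (σ → ℤ) × σ → W}
  {θ : Derivation R (MvPolynomial σ R) (MvPolynomial σ R) →ₗ[R] W}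

theorem map_lie_mkDerivation_single_monomial
    (hw : ∀ (a b : σ → ℤ) (i j : σ),
      ⁅w (a, i), w (b, j)⁆ = (a j : R) • w (a + b, i) - (b i : R) • w (a + b, j))
    (hθ : ∀ (a : σ →₀ ℕ) (i : σ),
      θ (mkDerivation R (Pi.single i (monomial a 1))) = -w (wittExponent a i, i))
    (i j : σ) (a b : σ →₀ ℕ) :
    θ ⁅mkDerivation R (Pi.single i (monomial a (1 : R))),
        mkDerivation R (Pi.single j (monomial b (1 : R)))⁆ =
      ⁅θ (mkDerivation R (Pi.single i (monomial a 1))),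
        θ (mkDerivation R (Pi.single j (monomial b 1)))⁆ := by
  -- `a + b - e_l` is truncated in `ℕ` only when its coefficient `a_l` resp. `b_l` vanishes.
  have hi : (a j : R) • w (wittExponent (a + b - Finsupp.single j 1) i, i) =
      (a j : R) • w (wittExponent a i + wittExponent b j, i) :=
    natCast_smul_congr w fun h => by rw [wittExponent_add_tsub_single (by omega)]
  have hj : (b i : R) • w (wittExponent (a + b - Finsupp.single i 1) j, j) =
      (b i : R) • w (wittExponent a i + wittExponent b j, j) :=
    natCast_smul_congr w fun h => by
      rw [add_comm a b, wittExponent_add_tsub_single (by omega), add_comm]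
  rw [lie_mkDerivation_single_monomial, map_sub, map_smul, map_smul, hθ, hθ, hθ, hθ, lie_neg,
    neg_lie, neg_neg, hw, smul_neg, smul_neg, hi, hj]
  simp only [wittExponent]
  obtain rfl | hij := eq_or_ne i j
  · push_cast
    module
  · simp only [if_neg hij, if_neg hij.symm]
    push_cast
    module

end WittAlgebra

theorem stmt11_general (F : Type*) [Field F] (r : ℕ) (W : Type*)
    [LieRing W] [LieAlgebra F W]
    (bw : Module.Basis ((Fin r → ℤ) × Fin r) F W) (w : (Fin r → ℤ) × Fin r → W)
    (hw : ∀ ai, w ai = bw ai)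
    (hbracketW : ∀ (a b : Fin r → ℤ) (i j : Fin r),
      ⁅w (a, i), w (b, j)⁆ =
        ((a j : F)) • w (a + b, i) - ((b i : F)) • w (a + b, j))
    (θ : Derivation F (MvPolynomial (Fin r) F) (MvPolynomial (Fin r) F) →ₗ[F] W)
    (hθ : ∀ (a : Fin r →₀ ℕ) (i : Fin r),
      θ (MvPolynomial.mkDerivation F (Pi.single i (MvPolynomial.monomial a 1))) =
        - w (fun j => (a j : ℤ) - (if j = i then 1 else 0), i)) :
    Function.Injective θ ∧
      ∀ D₁ D₂ : Derivation F (MvPolynomial (Fin r) F) (MvPolynomial (Fin r) F),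
        θ ⁅D₁, D₂⁆ = ⁅θ D₁, θ D₂⁆ := by
  set b := derivationBasis F (Fin r)
  have hθb : θ ∘ b = -(bw ∘ wittIndex) := by
    funext ⟨i, a⟩
    simp only [Function.comp_apply, b, derivationBasis_apply, hθ, hw, Pi.neg_apply]
    rfl
  refine ⟨LinearMap.injective_of_linearIndependent b.span_eq ?_, θ.map_lie_of_basis b ?_⟩
  · rw [hθb]
    exact (bw.linearIndependent.comp _ wittIndex_injective).neg
  · rintro ⟨i, a⟩ ⟨j, a'⟩
    simpa only [b, derivationBasis_apply] using
      map_lie_mkDerivation_single_monomial hbracketW hθ i j a a'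

/-- In the two-sided Witt algebra `W(G, I)` with `G = ℤ^r` and `I = {1, …, r}` (an
abstract Lie algebra with basis `w(a, i)` and bracket
`[w(a,i), w(b,j)] = a_j w(a+b, i) − b_i w(a+b, j)`), the linear map
`θ : W_r → W(G, I)` sending `x^a ∂_i` to `−w(a − e_i, i)` is an injective homomorphism of
Lie algebras, where `W_r = Der(F[x_1, …, x_r])`. -/
theorem stmt11 (F : Type*) [Field F] [CharZero F] (r : ℕ) (W : Type*)
    [LieRing W] [LieAlgebra F W]
    (bw : Module.Basis ((Fin r → ℤ) × Fin r) F W) (w : (Fin r → ℤ) × Fin r → W)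
    (hw : ∀ ai, w ai = bw ai)
    (hbracketW : ∀ (a b : Fin r → ℤ) (i j : Fin r),
      ⁅w (a, i), w (b, j)⁆ =
        ((a j : F)) • w (a + b, i) - ((b i : F)) • w (a + b, j))
    (θ : Derivation F (MvPolynomial (Fin r) F) (MvPolynomial (Fin r) F) →ₗ[F] W)
    (hθ : ∀ (a : Fin r →₀ ℕ) (i : Fin r),
      θ (MvPolynomial.mkDerivation F (Pi.single i (MvPolynomial.monomial a 1))) =
        - w (fun j => (a j : ℤ) - (if j = i then 1 else 0), i)) :
    Function.Injective θ ∧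
      ∀ D₁ D₂ : Derivation F (MvPolynomial (Fin r) F) (MvPolynomial (Fin r) F),
        θ ⁅D₁, D₂⁆ = ⁅θ D₁, θ D₂⁆ :=
  stmt11_general F r W bw w hw hbracketW θ hθ
end

section
/- Let g be a ℤ-graded Lie algebra g = ⊕_{n∈ℤ} g_n with g₁ ≠ 0 and g₀ a Lie algebra with trivial center. If D₀ is the degree derivation of g (acting on g_n as multiplication by n), then D₀ is not an inner derivation of g. -/
/-- Let `g = ⊕ₙ gₙ` be a `ℤ`-graded Lie algebra (over a field of characteristic zero)
with `g₁ ≠ 0` and `g₀` having trivial center.  Then the degree derivation `D₀` (acting on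
`gₙ` as multiplication by `n`) is not inner. -/
theorem stmt12 (F L : Type*) [Field F] [CharZero F] [LieRing L] [LieAlgebra F L]
    (g : ℤ → Submodule F L) (hdecomp : DirectSum.IsInternal g)
    (hgrading : ∀ m n : ℤ, ∀ x ∈ g m, ∀ y ∈ g n, ⁅x, y⁆ ∈ g (m + n))
    (hone : g 1 ≠ ⊥)
    (hcenter0 : ∀ x ∈ g 0, (∀ y ∈ g 0, ⁅x, y⁆ = 0) → x = 0)
    (D₀ : LieDerivation F L L)
    (hD₀ : ∀ n : ℤ, ∀ x ∈ g n, D₀ x = (n : F) • x) :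
    ∀ y : L, D₀ ≠ LieDerivation.ad F L y := by
  intro y hy
  classical
  letI : DirectSum.Decomposition g := hdecomp.chooseDecomposition
  have had : ∀ v : L, D₀ v = ⁅y, v⁆ := by
    intro v
    rw [hy]
    simp [LieDerivation.ad_apply_apply]
  -- the component of y in degree 0
  set y₀ : L := (DirectSum.decompose g y 0 : L) with hy₀
  have hy₀mem : y₀ ∈ g 0 := (DirectSum.decompose g y 0).2
  -- key: for v ∈ g m, the degree-m component of ⁅y, v⁆ is ⁅y₀, v⁆
  have key : ∀ m : ℤ, ∀ v ∈ g m,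
      ((DirectSum.decompose g ⁅y, v⁆ m : g m) : L) = ⁅y₀, v⁆ := by
    intro m v hv
    have sum_lie' : ∀ (s : Finset ℤ) (f : ℤ → L),
        ⁅∑ i ∈ s, f i, v⁆ = ∑ i ∈ s, ⁅f i, v⁆ := fun s f =>
      map_sum (AddMonoidHom.mk' (fun x => ⁅x, v⁆) (fun a b => add_lie a b v)) f s
    conv_lhs => rw [← DirectSum.sum_support_decompose g y]
    rw [sum_lie', DirectSum.decompose_sum, DFinsupp.finset_sum_apply, AddSubmonoidClass.coe_finset_sum]
    rw [Finset.sum_eq_single (0 : ℤ)]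
    · rw [DirectSum.decompose_of_mem_same g
        (by simpa using hgrading 0 m _ (DirectSum.decompose g y 0).2 v hv)]
    · intro n _ hn
      rw [DirectSum.decompose_of_mem_ne g
        (hgrading n m _ (DirectSum.decompose g y n).2 v hv)]
      omega
    · intro h0
      rw [DFinsupp.notMem_support_iff.mp h0]
      simp
  -- y₀ commutes with everything in g 0, hence y₀ = 0
  have hy₀zero : y₀ = 0 := by
    apply hcenter0 y₀ hy₀mem
    intro v hv
    have h1 : D₀ v = 0 := by rw [hD₀ 0 v hv]; simp
    have h2 := key 0 v hv
    rw [← had v, h1] at h2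
    simpa using h2.symm
  -- every v ∈ g 1 is zero
  apply hone
  rw [Submodule.eq_bot_iff]
  intro v hv
  have h1 : D₀ v = v := by rw [hD₀ 1 v hv]; simp
  have h2 := key 1 v hv
  rw [← had v, h1, DirectSum.decompose_of_mem_same g hv, hy₀zero] at h2
  simpa using h2
end

section
/- Let g be a simple Lie algebra with universal central extension 0 → Ĉ → ĝ → g → 0, and let C be a central ideal of ĝ such that the only derivations of ĝ mapping C into C are the inner derivations. Then Der(ĝ/C) is a simple Lie algebra isomorphic to g. -/
/-!
Being a universal central extension, `ĝ` is perfect, and therefore every central extension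
`τ : E → ĝ` splits: on `⁅E, E⁆`, which still maps onto `ĝ`, the composite `q ∘ τ` is a central
extension of `g`, and the universal property provides a section. A derivation `D` of `ĝ ⧸ C`
gives the central extension of `ĝ` formed by the pairs `(x, u)` of `ĝ ⋉ ĝ` with `ū = D x̄`; a
section `x ↦ (x, D' x)` of it is a derivation `D'` of `ĝ` lifting `D`. Since `D'` preserves `C`,
it is inner, so `x ↦ ad x̄` maps `ĝ` onto `Der(ĝ ⧸ C)`. Its kernel `{x | ⁅x, ĝ⁆ ⊆ C}` is
`ker q = Z(ĝ)` because `g` has trivial centre, hence `Der(ĝ ⧸ C) ≅ ĝ ⧸ ker q ≅ g`.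
-/

open LieModule.Cohomology

namespace LieIdeal

variable {R L : Type*} [CommRing R] [LieRing L] [LieAlgebra R L]

def mkQ (I : LieIdeal R L) : L →ₗ⁅R⁆ L ⧸ I :=
  { (LieSubmodule.Quotient.mk' I : L →ₗ[R] L ⧸ I) with map_lie' := rfl }

lemma mkQ_surjective (I : LieIdeal R L) : Function.Surjective I.mkQ :=
  LieSubmodule.Quotient.surjective_mk' I

@[simp] lemma ker_mkQ (I : LieIdeal R L) : I.mkQ.ker = I := by
  ext x
  exact LieSubmodule.Quotient.mk_eq_zero'

end LieIdeal

namespace LieHom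

variable {R L L' : Type*} [CommRing R] [LieRing L] [LieAlgebra R L]
  [LieRing L'] [LieAlgebra R L']

lemma apply_mem_center_iff {f : L →ₗ⁅R⁆ L'} (hf : Function.Surjective f) (x : L) :
    f x ∈ LieAlgebra.center R L' ↔ ∀ z : L, ⁅z, x⁆ ∈ f.ker := by
  simp only [LieModule.mem_maxTrivSubmodule, hf.forall, ← LieHom.map_lie, LieHom.mem_ker]

lemma center_le_ker {f : L →ₗ⁅R⁆ L'} (hf : Function.Surjective f)
    (h : LieAlgebra.center R L' = ⊥) : LieAlgebra.center R L ≤ f.ker := by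
  intro x hx
  have : f x ∈ LieAlgebra.center R L' := (f.apply_mem_center_iff hf x).mpr fun z ↦ by
    rw [(LieModule.mem_maxTrivSubmodule R L L x).mp hx z]
    exact f.ker.zero_mem
  rwa [h, LieSubmodule.mem_bot] at this

noncomputable def quotKerEquivOfSurjective (f : L →ₗ⁅R⁆ L') (hf : Function.Surjective f) :
    (L ⧸ f.ker) ≃ₗ⁅R⁆ L' :=
  f.quotKerEquivRange.trans
    ((LieEquiv.ofEq _ _ (congrArg _ ((LieHom.range_eq_top f).mpr hf))).trans
      LieSubalgebra.topEquiv)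

lemma nonempty_lieEquiv_of_ker_eq {L'' : Type*} [LieRing L''] [LieAlgebra R L'']
    {f : L →ₗ⁅R⁆ L'} {g : L →ₗ⁅R⁆ L''} (hf : Function.Surjective f)
    (hg : Function.Surjective g) (h : f.ker = g.ker) : Nonempty (L' ≃ₗ⁅R⁆ L'') := by
  have e := g.quotKerEquivOfSurjective hg
  rw [← h] at e
  exact ⟨(f.quotKerEquivOfSurjective hf).symm.trans e⟩

end LieHom

lemma LieAlgebra.IsSimple.of_lieEquiv {R L₁ L₂ : Type*} [CommRing R] [LieRing L₁]
    [LieAlgebra R L₁] [LieRing L₂] [LieAlgebra R L₂] (e : L₁ ≃ₗ⁅R⁆ L₂) [IsSimple R L₂] :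
    IsSimple R L₁ where
  eq_bot_or_eq_top I := by
    refine (IsSimple.eq_bot_or_eq_top (I.map e.toLieHom)).imp
      (LieIdeal.bot_of_map_eq_bot e.injective) fun htop ↦ ?_
    rw [eq_top_iff]
    intro x _
    obtain ⟨y, hy⟩ := LieIdeal.mem_map_of_surjective e.surjective
      (htop ▸ LieSubmodule.mem_top (e x) : e x ∈ I.map e.toLieHom)
    exact e.injective hy ▸ y.2
  non_abelian h := IsSimple.non_abelian R (L := L₂) (e.surjective.isLieAbelian h)

namespace LieAlgebra

variable {R : Type*} [CommRing R]

structure IsCentralExtension {L M : Type*} [LieRing L] [LieAlgebra R L] [LieRing M]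
    [LieAlgebra R M] (q : L →ₗ⁅R⁆ M) : Prop where
  surjective : Function.Surjective q
  ker_le_center : q.ker ≤ center R L

structure IsUniversalCentralExtension {L : Type u} {M : Type*} [LieRing L] [LieAlgebra R L]
    [LieRing M] [LieAlgebra R M] (q : L →ₗ⁅R⁆ M) : Prop extends IsCentralExtension q where
  existsUnique_lift : ∀ (E : Type u) [LieRing E] [LieAlgebra R E] (π : E →ₗ⁅R⁆ M),
    IsCentralExtension π → ∃! ψ : L →ₗ⁅R⁆ E, π.comp ψ = q

lemma lie_eq_zero_of_mem_lie_top_top {E : Type*} [LieRing E] [LieAlgebra R E] {k x : E}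
    (hk : ∀ e : E, ⁅e, k⁆ ∈ center R E) (hx : x ∈ ⁅(⊤ : LieIdeal R E), (⊤ : LieIdeal R E)⁆) :
    ⁅x, k⁆ = 0 := by
  rw [← LieSubmodule.mem_toSubmodule, LieSubmodule.lieIdeal_oper_eq_linear_span'] at hx
  induction hx using Submodule.span_induction with
  | mem _ h =>
    obtain ⟨a, -, b, -, rfl⟩ := h
    rw [lie_lie, (LieModule.mem_maxTrivSubmodule R E E _).mp (hk b) a,
      (LieModule.mem_maxTrivSubmodule R E E _).mp (hk a) b, sub_zero]
  | zero => exact zero_lie k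
  | add _ _ _ _ h₁ h₂ => rw [add_lie, h₁, h₂, add_zero]
  | smul t _ _ h => rw [smul_lie, h, smul_zero]

namespace IsUniversalCentralExtension

variable {L : Type u} {M : Type*} [LieRing L] [LieAlgebra R L] [LieRing M] [LieAlgebra R M]
  {q : L →ₗ⁅R⁆ M}

lemma hom_ext (hq : IsUniversalCentralExtension q) {E : Type u} [LieRing E] [LieAlgebra R E]
    {π : E →ₗ⁅R⁆ M} (hπ : IsCentralExtension π) {ψ₁ ψ₂ : L →ₗ⁅R⁆ E}
    (h₁ : π.comp ψ₁ = q) (h₂ : π.comp ψ₂ = q) : ψ₁ = ψ₂ :=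
  (hq.existsUnique_lift E π hπ).unique h₁ h₂

/-- Comparing the two lifts `x ↦ (x, 0)` and `x ↦ (x, x̄)` of `q` to the central extension
`L × L ⧸ ⁅L, L⁆` of `M`. -/
lemma lie_top_top_eq_top (hq : IsUniversalCentralExtension q) :
    ⁅(⊤ : LieIdeal R L), (⊤ : LieIdeal R L)⁆ = ⊤ := by
  set I : LieIdeal R L := ⁅(⊤ : LieIdeal R L), (⊤ : LieIdeal R L)⁆
  have hI : ∀ a b : L ⧸ I, ⁅a, b⁆ = 0 := by
    intro a b
    obtain ⟨x, rfl⟩ := I.mkQ_surjective a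
    obtain ⟨y, rfl⟩ := I.mkQ_surjective b
    rw [← LieHom.map_lie, ← LieHom.mem_ker, LieIdeal.ker_mkQ]
    exact LieSubmodule.lie_mem_lie (LieSubmodule.mem_top x) (LieSubmodule.mem_top y)
  have hπ : IsCentralExtension (q.comp (LieHom.fst R L (L ⧸ I))) := by
    refine ⟨fun y ↦ ?_, fun e he ↦ ?_⟩
    · obtain ⟨x, rfl⟩ := hq.surjective y
      exact ⟨(x, 0), rfl⟩
    · have he₁ := (LieModule.mem_maxTrivSubmodule R L L _).mp (hq.ker_le_center he)
      refine (LieModule.mem_maxTrivSubmodule R _ _ _).mpr fun z ↦ ?_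
      exact Prod.ext (he₁ z.1) (hI z.2 e.2)
  have h := hq.hom_ext hπ (ψ₁ := LieHom.id.prod 0) (ψ₂ := LieHom.id.prod I.mkQ) rfl rfl
  have hmk : 0 = I.mkQ := by
    simpa only [LieHom.snd_prod] using congrArg (LieHom.snd R L (L ⧸ I)).comp h
  rw [eq_top_iff, ← I.ker_mkQ, ← hmk]
  exact fun x _ ↦ LieHom.mem_ker.mpr rfl

/-- Restricted to `⁅E, E⁆`, which still maps onto `L` because `L` is perfect, the composite
`E → L → M` becomes a central extension: its kernel commutes with all brackets by Jacobi. -/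
lemma exists_section (hq : IsUniversalCentralExtension q) {E : Type u} [LieRing E]
    [LieAlgebra R E] {τ : E →ₗ⁅R⁆ L} (hτ : IsCentralExtension τ) :
    ∃ s : L →ₗ⁅R⁆ E, τ.comp s = LieHom.id := by
  set E' : LieIdeal R E := ⁅(⊤ : LieIdeal R E), (⊤ : LieIdeal R E)⁆
  let ρ : E' →ₗ⁅R⁆ L := τ.comp E'.incl
  have hρ : Function.Surjective ρ := by
    intro x
    have hx : x ∈ E'.map τ := by
      rw [LieIdeal.map_bracket_eq τ hτ.surjective, ← LieHom.idealRange_eq_map,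
        τ.idealRange_eq_top_of_surjective hτ.surjective, hq.lie_top_top_eq_top]
      exact LieSubmodule.mem_top x
    exact LieIdeal.mem_map_of_surjective hτ.surjective hx
  have hqρ : IsCentralExtension (q.comp ρ) := by
    refine ⟨hq.surjective.comp hρ, fun k hk ↦ ?_⟩
    have hτk : ∀ e : E, ⁅e, (k : E)⁆ ∈ center R E := fun e ↦ hτ.ker_le_center <|
      ((τ.apply_mem_center_iff hτ.surjective k).mp (hq.ker_le_center hk)) e
    exact (LieModule.mem_maxTrivSubmodule R _ _ _).mpr fun y ↦
      Subtype.ext (lie_eq_zero_of_mem_lie_top_top hτk y.2)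
  obtain ⟨ψ, hψ, -⟩ := hq.existsUnique_lift E' (q.comp ρ) hqρ
  exact ⟨E'.incl.comp ψ, hq.hom_ext hq.toIsCentralExtension hψ rfl⟩

end IsUniversalCentralExtension

-- `ofTwoCocycle (0 : twoCocycle R L M)` is the semidirect product `L ⋉ M`, `M` an abelian ideal.
namespace ofTwoCocycle

variable {L M : Type*} [LieRing L] [LieAlgebra R L] [AddCommGroup M] [Module R M]
  [LieRingModule L M] [LieModule R L M]

@[simp] lemma lie_carrier_of_zero (x y : ofTwoCocycle (0 : twoCocycle R L M)) :
    ⁅x, y⁆.carrier =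
      (⁅x.carrier.1, y.carrier.1⁆, ⁅x.carrier.1, y.carrier.2⁆ - ⁅y.carrier.1, x.carrier.2⁆) := by
  simp [bracket_ofTwoCocycle, ofProd]

variable (c : twoCocycle R L M)

def fst : ofTwoCocycle c →ₗ⁅R⁆ L where
  toFun x := x.carrier.1
  map_add' _ _ := rfl
  map_smul' _ _ := rfl
  map_lie' := rfl

def derivationOfSection (s : L →ₗ⁅R⁆ ofTwoCocycle (0 : twoCocycle R L M))
    (hs : ∀ x, (s x).carrier.1 = x) : LieDerivation R L M where
  toFun x := (s x).carrier.2
  map_add' x y := by rw [map_add]; rfl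
  map_smul' t x := by rw [map_smul]; rfl
  leibniz' x y := by
    change (s ⁅x, y⁆).carrier.2 = ⁅x, (s y).carrier.2⁆ - ⁅y, (s x).carrier.2⁆
    rw [LieHom.map_lie, lie_carrier_of_zero, hs, hs]

end ofTwoCocycle

section DerivationLift

variable {L L' : Type*} [LieRing L] [LieAlgebra R L] [LieRing L'] [LieAlgebra R L']

def liftingPairs (p : L →ₗ⁅R⁆ L') (D : LieDerivation R L' L') :
    LieSubalgebra R (ofTwoCocycle (0 : twoCocycle R L L)) where
  carrier := {w | D (p w.carrier.1) = p w.carrier.2}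
  add_mem' {a b} (ha : D (p a.carrier.1) = p a.carrier.2)
      (hb : D (p b.carrier.1) = p b.carrier.2) := by
    change D (p (a.carrier.1 + b.carrier.1)) = p (a.carrier.2 + b.carrier.2)
    rw [map_add, map_add, map_add, ha, hb]
  zero_mem' := by
    change D (p 0) = p 0
    rw [map_zero, map_zero]
  smul_mem' t a (ha : D (p a.carrier.1) = p a.carrier.2) := by
    change D (p (t • a.carrier.1)) = p (t • a.carrier.2)
    rw [map_smul, map_smul, map_smul, ha]
  lie_mem' {a b} (ha : D (p a.carrier.1) = p a.carrier.2)
      (hb : D (p b.carrier.1) = p b.carrier.2) := by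
    change D (p ⁅a, b⁆.carrier.1) = p ⁅a, b⁆.carrier.2
    rw [ofTwoCocycle.lie_carrier_of_zero, LieHom.map_lie, LieDerivation.apply_lie_eq_sub, map_sub,
      LieHom.map_lie, LieHom.map_lie, ha, hb]

lemma mem_liftingPairs {p : L →ₗ⁅R⁆ L'} {D : LieDerivation R L' L'}
    {w : ofTwoCocycle (0 : twoCocycle R L L)} :
    w ∈ liftingPairs p D ↔ D (p w.carrier.1) = p w.carrier.2 := Iff.rfl

lemma isCentralExtension_fst_comp_liftingPairs_incl {p : L →ₗ⁅R⁆ L'}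
    (hp : IsCentralExtension p) (D : LieDerivation R L' L') :
    IsCentralExtension ((ofTwoCocycle.fst 0).comp (liftingPairs p D).incl) := by
  refine ⟨fun x ↦ ?_, fun w hw ↦ ?_⟩
  · obtain ⟨u, hu⟩ := hp.surjective (D (p x))
    exact ⟨⟨⟨(x, u)⟩, hu.symm⟩, rfl⟩
  · have hw₁ : (w : ofTwoCocycle (0 : twoCocycle R L L)).carrier.1 = 0 := hw
    have hw₂ := hp.ker_le_center <| LieHom.mem_ker.mpr <|
      (mem_liftingPairs.mp w.2).symm.trans (by rw [hw₁, map_zero, map_zero])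
    refine (LieModule.mem_maxTrivSubmodule R _ _ _).mpr fun v ↦ ?_
    apply Subtype.ext
    apply (ofProd 0).symm.injective
    change ⁅(v : ofTwoCocycle (0 : twoCocycle R L L)),
      (w : ofTwoCocycle (0 : twoCocycle R L L))⁆.carrier = 0
    rw [ofTwoCocycle.lie_carrier_of_zero, hw₁, lie_zero, zero_lie, sub_zero]
    exact Prod.ext rfl ((LieModule.mem_maxTrivSubmodule R L L _).mp hw₂ _)

end DerivationLift

lemma IsUniversalCentralExtension.exists_lieDerivation_lift {L : Type u} {M : Type*} [LieRing L]
    [LieAlgebra R L] [LieRing M] [LieAlgebra R M] {q : L →ₗ⁅R⁆ M}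
    (hq : IsUniversalCentralExtension q) {L' : Type*} [LieRing L'] [LieAlgebra R L']
    {p : L →ₗ⁅R⁆ L'} (hp : IsCentralExtension p) (D : LieDerivation R L' L') :
    ∃ D' : LieDerivation R L L, ∀ x, p (D' x) = D (p x) := by
  obtain ⟨s, hs⟩ := hq.exists_section (isCentralExtension_fst_comp_liftingPairs_incl hp D)
  have hs₁ : ∀ x, (s x : ofTwoCocycle (0 : twoCocycle R L L)).carrier.1 = x :=
    LieHom.congr_fun hs
  refine ⟨ofTwoCocycle.derivationOfSection ((liftingPairs p D).incl.comp s) hs₁, fun x ↦ ?_⟩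
  change p (s x : ofTwoCocycle (0 : twoCocycle R L L)).carrier.2 = D (p x)
  rw [← mem_liftingPairs.mp (s x).2, hs₁]

lemma ad_comp_surjective {L : Type u} {L' M : Type*} [LieRing L] [LieAlgebra R L] [LieRing L']
    [LieAlgebra R L'] [LieRing M] [LieAlgebra R M] {q : L →ₗ⁅R⁆ M}
    (hq : IsUniversalCentralExtension q) {p : L →ₗ⁅R⁆ L'} (hp : IsCentralExtension p)
    (hinner : ∀ D : LieDerivation R L L, (∀ x ∈ p.ker, D x ∈ p.ker) →
      ∃ y, D = LieDerivation.ad R L y) :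
    Function.Surjective ((LieDerivation.ad R L').comp p) := by
  intro D
  obtain ⟨D', hD'⟩ := hq.exists_lieDerivation_lift hp D
  obtain ⟨y, rfl⟩ := hinner D' fun x hx ↦ by
    rw [LieHom.mem_ker, hD', LieHom.mem_ker.mp hx, map_zero]
  refine ⟨y, LieDerivation.ext fun a ↦ ?_⟩
  obtain ⟨x, rfl⟩ := hp.surjective a
  rw [← hD']
  simp

lemma ker_ad_comp_eq_ker {L L' M : Type*} [LieRing L] [LieAlgebra R L] [LieRing L']
    [LieAlgebra R L'] [LieRing M] [LieAlgebra R M] {p : L →ₗ⁅R⁆ L'} {q : L →ₗ⁅R⁆ M}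
    (hp : IsCentralExtension p) (hq : IsCentralExtension q) (hM : center R M = ⊥) :
    ((LieDerivation.ad R L').comp p).ker = q.ker := by
  ext x
  rw [LieHom.mem_ker, LieHom.comp_apply, ← LieHom.mem_ker, LieDerivation.ad_ker_eq_center,
    p.apply_mem_center_iff hp.surjective]
  constructor
  · intro hx
    have hqx : q x ∈ center R M := (q.apply_mem_center_iff hq.surjective x).mpr fun z ↦
      q.center_le_ker hq.surjective hM (hp.ker_le_center (hx z))
    rwa [hM, LieSubmodule.mem_bot, ← LieHom.mem_ker] at hqx
  · intro hx z
    rw [(LieModule.mem_maxTrivSubmodule R L L x).mp (hq.ker_le_center hx) z]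
    exact p.ker.zero_mem

end LieAlgebra

/-- Let `g` be a simple Lie algebra with universal central extension `q : ĝ → g`, and let
`C` be a central ideal of `ĝ` such that the only derivations of `ĝ` mapping `C` into `C`
are the inner derivations.  Then `Der(ĝ/C)` is a simple Lie algebra isomorphic to `g`. -/
theorem stmt13 (F : Type u) [Field F]
    (g ghat : Type u) [LieRing g] [LieAlgebra F g] [LieRing ghat] [LieAlgebra F ghat]
    (hsimple : LieAlgebra.IsSimple F g)
    -- `q : ĝ → g` is a central extension
    (q : ghat →ₗ⁅F⁆ g) (hqsurj : Function.Surjective q)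
    (hqcent : q.ker ≤ LieAlgebra.center F ghat)
    -- ... which is universal
    (huniv : ∀ (E : Type u) [LieRing E] [LieAlgebra F E] (π : E →ₗ⁅F⁆ g),
      Function.Surjective π → π.ker ≤ LieAlgebra.center F E →
        ∃! ψ : ghat →ₗ⁅F⁆ E, π.comp ψ = q)
    -- `C` is a central ideal of `ĝ`
    (C : LieIdeal F ghat) (hC : C ≤ LieAlgebra.center F ghat)
    -- every derivation of `ĝ` mapping `C` into `C` is inner
    (hstab : ∀ D : LieDerivation F ghat ghat, (∀ x ∈ C, D x ∈ C) →
      ∃ y : ghat, D = LieDerivation.ad F ghat y) :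
    LieAlgebra.IsSimple F (LieDerivation F (ghat ⧸ C) (ghat ⧸ C)) ∧
      Nonempty (LieDerivation F (ghat ⧸ C) (ghat ⧸ C) ≃ₗ⁅F⁆ g) := by
  have hq : LieAlgebra.IsUniversalCentralExtension q :=
    ⟨⟨hqsurj, hqcent⟩, fun E _ _ π hπ ↦ huniv E π hπ.surjective hπ.ker_le_center⟩
  have hp : LieAlgebra.IsCentralExtension C.mkQ := ⟨C.mkQ_surjective, by rwa [C.ker_mkQ]⟩
  obtain ⟨e⟩ := LieHom.nonempty_lieEquiv_of_ker_eq
    (LieAlgebra.ad_comp_surjective hq hp (by simpa only [LieIdeal.ker_mkQ] using hstab)) hqsurj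
    (LieAlgebra.ker_ad_comp_eq_ker hp hq.toIsCentralExtension (LieAlgebra.center_eq_bot F g))
  exact ⟨LieAlgebra.IsSimple.of_lieEquiv e, ⟨e⟩⟩
end

section
/- Let g be a complete simple Lie algebra over a field F and let L be a covering algebra of g. Then Der(L) is isomorphic to g; in particular Der(L) is simple and complete. -/
/-!
Since `ker p` is central and `g` is centerless, `ker p` is exactly the center of `L`, which is the
kernel of `ad : L → Der L`; so `ad` descends to an injective map `g → Der L`. It is surjective: a
derivation `D` of `L` preserves the center, hence induces a derivation of `g`, which is inner, say
`ad (p x₀)`. Then `D - ad x₀` maps `L` into its center, so it kills every bracket and vanishes on the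
perfect algebra `L`. Simplicity and completeness of `g` transfer along `g ≃ Der L`.
-/

open LieAlgebra

namespace LinearMap

variable {R M N P : Type*} [CommRing R] [AddCommGroup M] [Module R M] [AddCommGroup N] [Module R N]
  [AddCommGroup P] [Module R P]

noncomputable def liftOfSurjective (p : M →ₗ[R] N) (hp : Function.Surjective p) (f : M →ₗ[R] P)
    (h : ∀ x, p x = 0 → f x = 0) : N →ₗ[R] P :=
  (ker p).liftQ f h ∘ₗ (p.quotKerEquivOfSurjective hp).symm.toLinearMap

@[simp]
lemma liftOfSurjective_apply (p : M →ₗ[R] N) (hp : Function.Surjective p) (f : M →ₗ[R] P)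
    (h : ∀ x, p x = 0 → f x = 0) (x : M) : p.liftOfSurjective hp f h (p x) = f x := by
  have : (p.quotKerEquivOfSurjective hp).symm (p x) = Submodule.Quotient.mk x := by
    rw [LinearEquiv.symm_apply_eq, quotKerEquivOfSurjective_apply_mk]
  simp only [liftOfSurjective, coe_comp, LinearEquiv.coe_coe, Function.comp_apply, this]
  exact Submodule.liftQ_apply _ _ _

end LinearMap

section

variable {R L L' M : Type*} [CommRing R] [LieRing L] [LieAlgebra R L] [LieRing L'] [LieAlgebra R L']
  [LieRing M] [LieAlgebra R M]

namespace LieHom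

noncomputable def liftOfSurjective (p : L →ₗ⁅R⁆ L') (hp : Function.Surjective p) (f : L →ₗ⁅R⁆ M)
    (h : ∀ x, p x = 0 → f x = 0) : L' →ₗ⁅R⁆ M :=
  let φ := (p : L →ₗ[R] L').liftOfSurjective hp f h
  have hφ (x : L) : φ (p x) = f x := LinearMap.liftOfSurjective_apply _ hp _ h x
  { φ with
    map_lie' := by
      intro x y
      obtain ⟨a, rfl⟩ := hp x
      obtain ⟨b, rfl⟩ := hp y
      change φ _ = ⁅φ _, φ _⁆
      rw [← p.map_lie, hφ, hφ, hφ, f.map_lie] }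

@[simp]
lemma liftOfSurjective_apply (p : L →ₗ⁅R⁆ L') (hp : Function.Surjective p) (f : L →ₗ⁅R⁆ M)
    (h : ∀ x, p x = 0 → f x = 0) (x : L) : p.liftOfSurjective hp f h (p x) = f x :=
  LinearMap.liftOfSurjective_apply _ hp _ h x

lemma map_mem_center_of_surjective {p : L →ₗ⁅R⁆ L'} (hp : Function.Surjective p) {z : L}
    (hz : z ∈ center R L) : p z ∈ center R L' := by
  rw [LieModule.mem_maxTrivSubmodule] at hz ⊢
  intro y
  obtain ⟨x, rfl⟩ := hp y
  rw [← p.map_lie, hz, map_zero]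

lemma ker_eq_center_of_surjective {p : L →ₗ⁅R⁆ L'} (hp : Function.Surjective p)
    (hker : p.ker ≤ center R L) (hcenter : center R L' = ⊥) : p.ker = center R L := by
  refine le_antisymm hker fun z hz ↦ ?_
  have := map_mem_center_of_surjective hp hz
  rwa [hcenter, LieSubmodule.mem_bot, ← mem_ker] at this

end LieHom

namespace LieDerivation

noncomputable def liftOfSurjective (p : L →ₗ⁅R⁆ L') (hp : Function.Surjective p)
    (D : LieDerivation R L L) (hD : ∀ x, p x = 0 → p (D x) = 0) : LieDerivation R L' L' :=
  let φ := (p : L →ₗ[R] L').liftOfSurjective hp ((p : L →ₗ[R] L') ∘ₗ D) hD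
  have hφ (x : L) : φ (p x) = p (D x) := LinearMap.liftOfSurjective_apply _ hp _ hD x
  { φ with
    leibniz' := by
      intro x y
      obtain ⟨a, rfl⟩ := hp x
      obtain ⟨b, rfl⟩ := hp y
      rw [← p.map_lie, hφ, hφ, hφ, D.apply_lie_eq_sub, map_sub, p.map_lie, p.map_lie] }

@[simp]
lemma liftOfSurjective_apply (p : L →ₗ⁅R⁆ L') (hp : Function.Surjective p)
    (D : LieDerivation R L L) (hD : ∀ x, p x = 0 → p (D x) = 0) (x : L) :
    D.liftOfSurjective p hp hD (p x) = p (D x) :=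
  LinearMap.liftOfSurjective_apply _ hp _ hD x

lemma apply_mem_center (D : LieDerivation R L L) {z : L} (hz : z ∈ center R L) :
    D z ∈ center R L := by
  rw [LieModule.mem_maxTrivSubmodule] at hz ⊢
  intro x
  have := D.apply_lie_eq_sub x z
  rw [hz, map_zero, ← lie_skew z (D x), hz, neg_zero, sub_zero] at this
  exact this.symm

lemma eq_zero_of_forall_mem_center (hL : ⁅(⊤ : LieIdeal R L), (⊤ : LieIdeal R L)⁆ = ⊤)
    (D : LieDerivation R L L) (hD : ∀ x, D x ∈ center R L) : D = 0 := by
  have hker : (⊤ : Submodule R L) ≤ LinearMap.ker (D : L →ₗ[R] L) := by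
    rw [← LieSubmodule.top_toSubmodule (R := R) (L := L) (M := L), ← hL,
      LieSubmodule.lieIdeal_oper_eq_linear_span', Submodule.span_le]
    rintro _ ⟨x, -, y, -, rfl⟩
    have hD' : ∀ x y : L, ⁅y, D x⁆ = 0 := hD
    simp [D.apply_lie_eq_sub, hD']
  ext x
  exact hker Submodule.mem_top

variable {A B : Type*} [LieRing A] [LieAlgebra R A] [LieRing B] [LieAlgebra R B]

def conj (e : A ≃ₗ⁅R⁆ B) (D : LieDerivation R A A) : LieDerivation R B B where
  toLinearMap := (e : A →ₗ[R] B) ∘ₗ (D : A →ₗ[R] A) ∘ₗ (e.symm : B →ₗ[R] A)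
  leibniz' x y := by
    change e (D (e.symm ⁅x, y⁆)) = ⁅x, e (D (e.symm y))⁆ - ⁅y, e (D (e.symm x))⁆
    rw [e.symm.map_lie, D.apply_lie_eq_sub, map_sub, e.map_lie, e.map_lie, e.apply_symm_apply,
      e.apply_symm_apply]

@[simp]
lemma conj_apply (e : A ≃ₗ⁅R⁆ B) (D : LieDerivation R A A) (b : B) :
    conj e D b = e (D (e.symm b)) :=
  rfl

lemma conj_ad (e : A ≃ₗ⁅R⁆ B) (a : A) : conj e (ad R A a) = ad R B (e a) := by
  ext b
  simp [e.map_lie]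

lemma conj_conj_symm (e : A ≃ₗ⁅R⁆ B) (D : LieDerivation R B B) : conj e (conj e.symm D) = D := by
  ext b
  simp

end LieDerivation

namespace LieEquiv

variable {A B : Type*} [LieRing A] [LieAlgebra R A] [LieRing B] [LieAlgebra R B]

lemma isSimple (e : A ≃ₗ⁅R⁆ B) (h : IsSimple R A) : IsSimple R B where
  eq_bot_or_eq_top I := by
    have hI (x : B) : x ∈ I ↔ e.symm x ∈ I.comap (e : A →ₗ⁅R⁆ B) := by simp
    rcases h.eq_bot_or_eq_top (I.comap (e : A →ₗ⁅R⁆ B)) with hbot | htop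
    · left
      ext x
      simp [hI, hbot]
    · right
      ext x
      simp [hI, htop]
  non_abelian hB := h.non_abelian ((lie_abelian_iff_equiv_lie_abelian e).2 hB)

lemma center_eq_bot (e : A ≃ₗ⁅R⁆ B) (h : center R A = ⊥) : center R B = ⊥ := by
  refine (LieSubmodule.eq_bot_iff _).2 fun z hz ↦ ?_
  have : e.symm z ∈ center R A := fun a ↦ by
    rw [← e.symm_apply_apply a, ← e.symm.map_lie, hz, map_zero]
  rw [h, LieSubmodule.mem_bot] at this
  simpa using congrArg e this

lemma surjective_ad (e : A ≃ₗ⁅R⁆ B) (h : Function.Surjective (LieDerivation.ad R A)) :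
    Function.Surjective (LieDerivation.ad R B) := by
  intro D
  obtain ⟨a, ha⟩ := h (LieDerivation.conj e.symm D)
  exact ⟨e a, by rw [← LieDerivation.conj_ad, ha, LieDerivation.conj_conj_symm]⟩

end LieEquiv

namespace LieHom

variable (p : L →ₗ⁅R⁆ L') (hp : Function.Surjective p) (hker : p.ker ≤ center R L)

noncomputable def adOfCentralExtension : L' →ₗ⁅R⁆ LieDerivation R L L :=
  p.liftOfSurjective hp (LieDerivation.ad R L) fun x hx ↦ by
    rw [← LieHom.mem_ker, LieDerivation.ad_ker_eq_center]
    exact hker hx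

@[simp]
lemma adOfCentralExtension_apply (x : L) :
    p.adOfCentralExtension hp hker (p x) = LieDerivation.ad R L x :=
  liftOfSurjective_apply ..

variable {p hp hker}

lemma injective_adOfCentralExtension (hcenter : center R L' = ⊥) :
    Function.Injective (p.adOfCentralExtension hp hker) := by
  rw [← LieHom.ker_eq_bot, LieSubmodule.eq_bot_iff]
  intro y hy
  obtain ⟨x, rfl⟩ := hp y
  rwa [LieHom.mem_ker, adOfCentralExtension_apply, ← LieHom.mem_ker,
    LieDerivation.ad_ker_eq_center, ← ker_eq_center_of_surjective hp hker hcenter] at hy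

lemma surjective_adOfCentralExtension (hcenter : center R L' = ⊥)
    (hinner : Function.Surjective (LieDerivation.ad R L'))
    (hL : ⁅(⊤ : LieIdeal R L), (⊤ : LieIdeal R L)⁆ = ⊤) :
    Function.Surjective (p.adOfCentralExtension hp hker) := by
  have hker_eq : ∀ x, p x = 0 ↔ x ∈ center R L := fun x ↦ by
    rw [← LieHom.mem_ker, ker_eq_center_of_surjective hp hker hcenter]
  intro D
  have hD : ∀ x, p x = 0 → p (D x) = 0 := fun x hx ↦
    (hker_eq _).2 (D.apply_mem_center ((hker_eq x).1 hx))
  obtain ⟨y, hy⟩ := hinner (D.liftOfSurjective p hp hD)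
  obtain ⟨x₀, rfl⟩ := hp y
  have hcentral : ∀ x, (D - LieDerivation.ad R L x₀) x ∈ center R L := fun x ↦ by
    rw [← hker_eq, LieDerivation.sub_apply, map_sub, ← D.liftOfSurjective_apply p hp hD, ← hy]
    simp
  refine ⟨p x₀, ?_⟩
  rw [adOfCentralExtension_apply, eq_comm, ← sub_eq_zero]
  exact LieDerivation.eq_zero_of_forall_mem_center hL _ hcentral

end LieHom

end

/-- Let `g` be a complete simple Lie algebra over a field `F` and let `L` be a covering
algebra of `g`.  Then `Der(L) ≅ g`; in particular `Der(L)` is simple and complete. -/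
theorem stmt15 (F g L : Type*) [Field F] [LieRing g] [LieAlgebra F g]
    [LieRing L] [LieAlgebra F L]
    (hsimple : LieAlgebra.IsSimple F g)
    -- `g` is complete: trivial center and every derivation is inner
    (hcenterg : LieAlgebra.center F g = ⊥)
    (hinnerg : Function.Surjective (LieDerivation.ad F g))
    -- `L` is a covering algebra of `g` via `p`
    (p : L →ₗ⁅F⁆ g) (hpsurj : Function.Surjective p)
    (hpcent : p.ker ≤ LieAlgebra.center F L)
    (hLperf : ⁅(⊤ : LieIdeal F L), (⊤ : LieIdeal F L)⁆ = ⊤) :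
    Nonempty (LieDerivation F L L ≃ₗ⁅F⁆ g) ∧
      LieAlgebra.IsSimple F (LieDerivation F L L) ∧
      LieAlgebra.center F (LieDerivation F L L) = ⊥ ∧
      Function.Surjective (LieDerivation.ad F (LieDerivation F L L)) := by
  let e : g ≃ₗ⁅F⁆ LieDerivation F L L :=
    LieEquiv.ofBijective (p.adOfCentralExtension hpsurj hpcent)
      ⟨LieHom.injective_adOfCentralExtension hcenterg,
        LieHom.surjective_adOfCentralExtension hcenterg hinnerg hLperf⟩
  exact ⟨⟨e.symm⟩, e.isSimple hsimple, e.center_eq_bot hcenterg, e.surjective_ad hinnerg⟩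
end

section
/- Let L be a Lie algebra over a field F such that Der(L) is simple and complete. Then L is perfect and L/C(L) is a simple complete Lie algebra; i.e., L is a covering algebra of a simple complete Lie algebra. -/
/-!
Since `ad L` is an ideal of the simple algebra `Der L`, either `ad` is onto or `L` is abelian;
in the abelian case the identity is a central derivation, so `L = 0`, which is impossible.
Hence `L / C(L) ≅ Der L`, which gives simplicity and completeness of `L / C(L)`. As `Der L` is
perfect, `L = [L, L] + C(L)`, and `C(L) ⊆ [L, L]`: for a central `z ∉ [L, L]` and a functional `f`
vanishing on `[L, L]` with `f z ≠ 0`, the derivation `x ↦ f x • z` would be inner, yet it does not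
kill `z`.
-/

section

variable {R L L' : Type*} [CommRing R] [LieRing L] [LieAlgebra R L] [LieRing L'] [LieAlgebra R L']

lemma LieAlgebra.IsSimple.lie_top_top_eq_top [LieAlgebra.IsSimple R L] :
    ⁅(⊤ : LieIdeal R L), (⊤ : LieIdeal R L)⁆ = ⊤ :=
  lie_eq_self_of_isAtom_of_nonabelian ⊤ (LieAlgebra.IsSimple.isAtom_top R L)
    ((lie_abelian_iff_equiv_lie_abelian LieIdeal.topEquiv).not.mpr (IsSimple.non_abelian R))

lemma LieHom.lie_top_top_sup_ker_eq_top (f : L →ₗ⁅R⁆ L') (hf : Function.Surjective f)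
    (h : ⁅(⊤ : LieIdeal R L'), (⊤ : LieIdeal R L')⁆ = ⊤) :
    ⁅(⊤ : LieIdeal R L), (⊤ : LieIdeal R L)⁆ ⊔ f.ker = ⊤ := by
  have hmap : (LieIdeal.map f ⁅(⊤ : LieIdeal R L), (⊤ : LieIdeal R L)⁆ : Set L') =
      f '' (⁅(⊤ : LieIdeal R L), (⊤ : LieIdeal R L)⁆ : LieIdeal R L) :=
    congr_arg SetLike.coe (LieIdeal.coe_map_of_surjective hf)
  rw [← LieIdeal.comap_map_eq hmap, LieIdeal.map_bracket_eq f hf, ← LieHom.idealRange_eq_map,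
    f.idealRange_eq_top_of_surjective hf, h, (LieIdeal.gc_map_comap f).u_top]

lemma LieAlgebra.IsSimple.of_equiv (e : L ≃ₗ⁅R⁆ L') [LieAlgebra.IsSimple R L] :
    LieAlgebra.IsSimple R L' where
  eq_bot_or_eq_top I := by
    have hrange := LieHom.idealRange_eq_top_of_surjective e.toLieHom e.surjective
    have hI : I = LieIdeal.map e.toLieHom (LieIdeal.comap e.toLieHom I) := by
      rw [LieIdeal.map_comap_eq (LieHom.isIdealMorphism_of_surjective _ e.surjective), hrange,
        top_inf_eq]
    rcases IsSimple.eq_bot_or_eq_top (LieIdeal.comap e.toLieHom I) with h | h <;> rw [hI, h]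
    · exact .inl (LieIdeal.map_eq_bot_iff.mpr bot_le)
    · exact .inr ((LieHom.idealRange_eq_map _).symm.trans hrange)
  non_abelian := (lie_abelian_iff_equiv_lie_abelian e).not.mp (IsSimple.non_abelian R)

lemma LieAlgebra.center_eq_bot_of_equiv (e : L ≃ₗ⁅R⁆ L') (h : center R L = ⊥) :
    center R L' = ⊥ := by
  refine (LieSubmodule.eq_bot_iff _).mpr fun z hz ↦ ?_
  have : e.symm z ∈ center R L := (LieModule.mem_maxTrivSubmodule _ _ _ _).mpr fun x ↦ by
    have hzx := (LieModule.mem_maxTrivSubmodule _ _ _ _).mp hz (e x)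
    simpa [LieEquiv.map_lie] using congr(e.symm $hzx)
  rw [h, LieSubmodule.mem_bot] at this
  simpa using congr(e $this)

noncomputable def LieHom.quotKerEquivOfSurjective_s16 (f : L →ₗ⁅R⁆ L') (hf : Function.Surjective f) :
    (L ⧸ f.ker) ≃ₗ⁅R⁆ L' :=
  (f.quotKerEquivRange.trans (LieEquiv.ofEq _ _ (by rw [f.range_eq_top.mpr hf]))).trans
    LieSubalgebra.topEquiv

def LieDerivation.conj_s16 (e : L ≃ₗ⁅R⁆ L') (D : LieDerivation R L' L') : LieDerivation R L L where
  toLinearMap := (e.symm : L' →ₗ[R] L) ∘ₗ (D : L' →ₗ[R] L') ∘ₗ (e : L →ₗ[R] L')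
  leibniz' a b := by simp [LieEquiv.map_lie, D.apply_lie_eq_sub]

@[simp] lemma LieDerivation.conj_apply_s16 (e : L ≃ₗ⁅R⁆ L') (D : LieDerivation R L' L') (x : L) :
    D.conj_s16 e x = e.symm (D (e x)) := rfl

lemma LieDerivation.ad_surjective_of_equiv (e : L ≃ₗ⁅R⁆ L')
    (h : Function.Surjective (LieDerivation.ad R L)) :
    Function.Surjective (LieDerivation.ad R L') := by
  intro D
  obtain ⟨w, hw⟩ := h (D.conj_s16 e)
  refine ⟨e w, LieDerivation.ext fun x ↦ ?_⟩
  simpa [LieEquiv.map_lie] using congr(e ($hw (e.symm x)))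

end

namespace LieDerivation

variable {R L : Type*} [CommRing R] [LieRing L] [LieAlgebra R L]

def ofCentral (φ : L →ₗ[R] L) (hφ : ∀ a b : L, φ ⁅a, b⁆ = 0)
    (hc : ∀ x, φ x ∈ LieAlgebra.center R L) : LieDerivation R L L where
  toLinearMap := φ
  leibniz' a b := by
    have hb := (LieModule.mem_maxTrivSubmodule R L L _).mp (hc b) a
    have ha := (LieModule.mem_maxTrivSubmodule R L L _).mp (hc a) b
    simp [hφ, hb, ha]

@[simp] lemma ofCentral_apply (φ : L →ₗ[R] L) (hφ : ∀ a b : L, φ ⁅a, b⁆ = 0)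
    (hc : ∀ x, φ x ∈ LieAlgebra.center R L) (x : L) : ofCentral φ hφ hc x = φ x := rfl

lemma subsingleton_of_isLieAbelian [IsLieAbelian L]
    (h : LieAlgebra.center R (LieDerivation R L L) = ⊥) : Subsingleton L := by
  have hZ : LieAlgebra.center R L = ⊤ := (LieAlgebra.isLieAbelian_iff_center_eq_top R L).mp ‹_›
  let idDer : LieDerivation R L L :=
    ofCentral LinearMap.id (fun a b ↦ trivial_lie_zero L L a b) (by simp [hZ])
  have hid : idDer ∈ LieAlgebra.center R (LieDerivation R L L) :=
    (LieModule.mem_maxTrivSubmodule _ _ _ _).mpr fun D ↦ ext fun x ↦ by simp [idDer]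
  rw [h, LieSubmodule.mem_bot] at hid
  exact ⟨fun x y ↦ by simpa [idDer] using congr($hid x).trans congr($hid y).symm⟩

lemma ad_surjective_of_isSimple [LieAlgebra.IsSimple R (LieDerivation R L L)]
    (h : LieAlgebra.center R (LieDerivation R L L) = ⊥) : Function.Surjective (ad R L) := by
  rcases LieAlgebra.IsSimple.eq_bot_or_eq_top (ad R L).idealRange with hbot | htop
  · have : IsLieAbelian L := ⟨fun x y ↦ by
      have hx := (ad R L).mem_idealRange x
      rw [hbot, LieSubmodule.mem_bot] at hx
      simpa using congr($hx y)⟩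
    have := subsingleton_of_isLieAbelian h
    have : Subsingleton (LieDerivation R L L) := ⟨fun D E ↦ ext fun x ↦ Subsingleton.elim _ _⟩
    exact (LieAlgebra.not_isSimple_of_subsingleton R _ ‹_›).elim
  · exact fun D ↦ mem_ad_idealRange_iff.mp (htop ▸ LieSubmodule.mem_top D)

lemma center_le_lie_top_top_of_ad_surjective {K : Type*} [Field K] [LieAlgebra K L]
    (h : Function.Surjective (ad K L)) :
    LieAlgebra.center K L ≤ ⁅(⊤ : LieIdeal K L), ⊤⁆ := by
  intro z hz
  by_contra hzK
  obtain ⟨f, hfz, hfK⟩ := Submodule.exists_dual_map_eq_bot_of_notMem hzK inferInstance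
  have hfK' : ∀ a b : L, f ⁅a, b⁆ = 0 := fun a b ↦
    LinearMap.le_ker_iff_map.mpr hfK <|
      LieSubmodule.lie_mem_lie (LieSubmodule.mem_top a) (LieSubmodule.mem_top b)
  let D : LieDerivation K L L :=
    ofCentral (f.smulRight z) (by simp [hfK']) (fun x ↦ Submodule.smul_mem _ _ hz)
  obtain ⟨w, hw⟩ := h D
  have hDz : f z • z = ⁅w, z⁆ := by rw [← ad_apply_apply (R := K), hw]; rfl
  rw [(LieModule.mem_maxTrivSubmodule K L L z).mp hz w, smul_eq_zero] at hDz
  exact hDz.elim hfz fun h0 ↦ hzK (h0 ▸ zero_mem _)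

end LieDerivation

/-- Let `L` be a Lie algebra over a field `F` such that `Der(L)` is simple and complete.
Then `L` is perfect and `L/C(L)` is a simple complete Lie algebra; i.e., `L` is a covering
algebra of a simple complete Lie algebra. -/
theorem stmt16 (F L : Type*) [Field F] [LieRing L] [LieAlgebra F L]
    (hsimple : LieAlgebra.IsSimple F (LieDerivation F L L))
    -- `Der(L)` is complete: trivial center and every derivation is inner
    (hcenter : LieAlgebra.center F (LieDerivation F L L) = ⊥)
    (hinner : Function.Surjective (LieDerivation.ad F (LieDerivation F L L))) :
    ⁅(⊤ : LieIdeal F L), (⊤ : LieIdeal F L)⁆ = ⊤ ∧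
      LieAlgebra.IsSimple F (L ⧸ LieAlgebra.center F L) ∧
      LieAlgebra.center F (L ⧸ LieAlgebra.center F L) = ⊥ ∧
      Function.Surjective (LieDerivation.ad F (L ⧸ LieAlgebra.center F L)) := by
  have had := LieDerivation.ad_surjective_of_isSimple hcenter
  have hperfect : ⁅(⊤ : LieIdeal F L), (⊤ : LieIdeal F L)⁆ = ⊤ := by
    have := (LieDerivation.ad F L).lie_top_top_sup_ker_eq_top had
      LieAlgebra.IsSimple.lie_top_top_eq_top
    rwa [LieDerivation.ad_ker_eq_center,
      sup_eq_left.mpr (LieDerivation.center_le_lie_top_top_of_ad_surjective had)] at this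
  rw [← LieDerivation.ad_ker_eq_center F L]
  let e := ((LieDerivation.ad F L).quotKerEquivOfSurjective_s16 had).symm
  exact ⟨hperfect, .of_equiv e, LieAlgebra.center_eq_bot_of_equiv e hcenter,
    LieDerivation.ad_surjective_of_equiv e hinner⟩
end
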